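/- Let X be [0,1], [0,∞), (−∞,∞) or 𝕋 = [0,1]/{0,1}, and let I = C(X)⊗B (X compact) or C_0(X)⊗B (X noncompact), with M(I) = C_b(X, M(B)_s). Let x_1 < ⋯ < x_n be interior partition points dividing X into closed subintervals X_0, …, X_n, and let f_i ∈ C_b(X_i, M(B)_s) satisfy f_i(x_i) − f_{i−1}(x_i) ∈ B for i = 1, …, n (and f_0(x_0) − f_n(x_0) ∈ B, where x_0 = 0 = 1, when X = 𝕋). Then the tuple (f_0, …, f_n) determines a coset in the corona algebra C(I) = M(I)/I, and this coset consists exactly of the functions f ∈ M(I) such that f − f_i ∈ C(X_i)⊗B for every i and f − f_i vanishes in norm at any infinite endpoint of X_i. -/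

import Mathlib

/-!
STATEMENT 5: Let `X` be `[0,1]`, `[0,∞)`, `(−∞,∞)` or `𝕋 = [0,1]/{0,1}`, and let
`I = C(X)⊗B` (`X` compact) or `C₀(X)⊗B` (`X` noncompact), with `M(I) = C_b(X, M(B)_s)`.
Let `x₁ < ⋯ < xₙ` be interior partition points dividing `X` into closed subintervals
`X₀, …, Xₙ`, and let `fᵢ ∈ C_b(Xᵢ, M(B)_s)` satisfy `fᵢ(xᵢ) − f_{i−1}(xᵢ) ∈ B` for
`i = 1, …, n` (and `f₀(x₀) − fₙ(x₀) ∈ B`, where `x₀ = 0 = 1`, when `X = 𝕋`).  Then the tuple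
`(f₀, …, fₙ)` determines a coset in the corona algebra `C(I) = M(I)/I`, and this coset
consists exactly of the functions `f ∈ M(I)` such that `f − fᵢ ∈ C(Xᵢ)⊗B` for every `i` and
`f − fᵢ` vanishes in norm at any infinite endpoint of `Xᵢ`.

Modeling: `M(B)` is the double centralizer algebra `𝓜(ℂ, B)`, and `B ⊆ M(B)` is the range of
the canonical embedding.  The four spaces `X` are encoded by `SpaceCase`, realizing `X` as a
subset of `ℝ` — the circle as `[0,1]` with endpoint values identified (matching-value
conditions at `0 = 1`).  Elements of `M(I) = C_b(X, M(B)_s)` are bounded functions `X → M(B)`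
continuous for the strict topology; elements of `I` are norm-continuous `B`-valued functions
vanishing at infinity.  "`(f₀,…,fₙ)` determines a coset, consisting exactly of …" is expressed
by: the set `F` of functions `f ∈ M(I)` agreeing with each `fᵢ` modulo `C(Xᵢ)⊗B` (with the
vanishing conditions) is nonempty, and for `f ∈ F` and any `g ∈ M(I)` one has `g ∈ F`
iff `f − g ∈ I`.  Stability of `B` is encoded by the existence of a sequence of isometries of
`M(B)` with mutually orthogonal ranges summing strictly to `1`.
-/

open MultiplierAlgebra Filter Topology

/-- The canonical ideal `B` inside its multiplier algebra `𝓜(ℂ, B)`. -/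
def canonicalIdeal (B : Type*) [NonUnitalCStarAlgebra B] : Set 𝓜(ℂ, B) :=
  Set.range (DoubleCentralizer.coe ℂ : B → 𝓜(ℂ, B))

/-- Stability of `B`: there are isometries of `M(B)` with mutually orthogonal ranges summing
strictly to `1`. -/
def StableCStar (B : Type*) [NonUnitalCStarAlgebra B] : Prop :=
  ∃ S : ℕ → 𝓜(ℂ, B),
    (∀ i, star (S i) * S i = 1) ∧
    (∀ i j, i ≠ j → star (S i) * S j = 0) ∧
    (∀ b : B,
      Tendsto (fun N => ‖((1 : 𝓜(ℂ, B)) - ∑ i ∈ Finset.range N, S i * star (S i)) *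
        DoubleCentralizer.coe ℂ b‖) atTop (nhds 0) ∧
      Tendsto (fun N => ‖DoubleCentralizer.coe ℂ b *
        ((1 : 𝓜(ℂ, B)) - ∑ i ∈ Finset.range N, S i * star (S i))‖) atTop (nhds 0))

/-- The four base spaces: `[0,1]`, `[0,∞)`, `(−∞,∞)`, and the circle `𝕋 = [0,1]/{0,1}`. -/
inductive SpaceCase | interval | halfLine | line | circle

/-- The subset of `ℝ` realizing `X` (the circle via `[0,1]` with endpoints identified). -/
def caseSet : SpaceCase → Set ℝ
  | .interval => Set.Icc 0 1
  | .halfLine => Set.Ici 0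
  | .line => Set.univ
  | .circle => Set.Icc 0 1

/-- Left endpoint of `X` in the extended reals. -/
noncomputable def leftEnd : SpaceCase → EReal
  | .line => ⊥
  | _ => (0 : EReal)

/-- Right endpoint of `X` in the extended reals. -/
noncomputable def rightEnd : SpaceCase → EReal
  | .interval => (1 : EReal)
  | .circle => (1 : EReal)
  | _ => ⊤

/-- The closed subinterval `Xᵢ` determined by partition points `x 1 < ⋯ < x n`. -/
def subInt (c : SpaceCase) (n : ℕ) (x : ℕ → ℝ) (i : ℕ) : Set ℝ :=
  {t : ℝ | (if i = 0 then leftEnd c else (x i : EReal)) ≤ (t : EReal) ∧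
           (t : EReal) ≤ (if i = n then rightEnd c else (x (i + 1) : EReal))}

/-- The points `x 1 < ⋯ < x n` are increasing and interior to `X`. -/
def ValidPartition (c : SpaceCase) (n : ℕ) (x : ℕ → ℝ) : Prop :=
  (∀ i, 1 ≤ i → i < n → x i < x (i + 1)) ∧
  (∀ i, 1 ≤ i → i ≤ n → leftEnd c < (x i : EReal) ∧ (x i : EReal) < rightEnd c)

/-- Continuity of `F : ℝ → M(B)` on `s` for the strict topology of `𝓜(ℂ, B)`. -/
def StrictlyCtsOn {B : Type*} [NonUnitalCStarAlgebra B]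
    (F : ℝ → 𝓜(ℂ, B)) (s : Set ℝ) : Prop :=
  ∀ b : B,
    ContinuousOn (fun t => F t * DoubleCentralizer.coe ℂ b) s ∧
    ContinuousOn (fun t => DoubleCentralizer.coe ℂ b * F t) s

/-- Membership in `M(I) = C_b(X, M(B)_s)`: bounded, strictly continuous (and, for the circle,
matching values at the identified endpoints `0 = 1`). -/
def MemMult {B : Type*} [NonUnitalCStarAlgebra B] (c : SpaceCase)
    (f : ℝ → 𝓜(ℂ, B)) : Prop :=
  StrictlyCtsOn f (caseSet c) ∧
  (∃ C : ℝ, ∀ t ∈ caseSet c, ‖f t‖ ≤ C) ∧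
  (c = SpaceCase.circle → f 0 = f 1)

/-- Membership in `I` (`= C(X)⊗B` or `C₀(X)⊗B`): given by a norm-continuous `B`-valued
function, vanishing in norm at the infinite endpoints, matching at `0 = 1` for the circle. -/
def MemIdeal {B : Type*} [NonUnitalCStarAlgebra B] (c : SpaceCase)
    (f : ℝ → 𝓜(ℂ, B)) : Prop :=
  ∃ d : ℝ → B, ContinuousOn d (caseSet c) ∧
    (∀ t ∈ caseSet c, f t = DoubleCentralizer.coe ℂ (d t)) ∧
    (c = SpaceCase.circle → d 0 = d 1) ∧
    (c = SpaceCase.halfLine → Tendsto (fun t => ‖d t‖) atTop (nhds 0)) ∧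
    (c = SpaceCase.line → Tendsto (fun t => ‖d t‖) atTop (nhds 0) ∧
      Tendsto (fun t => ‖d t‖) atBot (nhds 0))

/-- `f − g ∈ C(Xᵢ)⊗B`, with `f − g` vanishing in norm at any infinite endpoint of `Xᵢ`. -/
def CoherentOn {B : Type*} [NonUnitalCStarAlgebra B] (c : SpaceCase) (n : ℕ) (x : ℕ → ℝ)
    (f g : ℝ → 𝓜(ℂ, B)) (i : ℕ) : Prop :=
  ∃ d : ℝ → B, ContinuousOn d (subInt c n x i) ∧
    (∀ t ∈ subInt c n x i, f t - g t = DoubleCentralizer.coe ℂ (d t)) ∧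
    ((c = SpaceCase.halfLine ∨ c = SpaceCase.line) → i = n →
      Tendsto (fun t => ‖d t‖) atTop (nhds 0)) ∧
    (c = SpaceCase.line → i = 0 → Tendsto (fun t => ‖d t‖) atBot (nhds 0))

/-!
Correct each piece `fᵢ` by a norm-continuous `B`-valued function `kᵢ`: on `Xᵢ` the constant
`d₁ + ⋯ + dᵢ`, where `dⱼ = fⱼ(xⱼ) − fⱼ₋₁(xⱼ) ∈ B` are the jumps, except that on the last piece this
constant is ramped linearly to `0` (so that `kₙ` vanishes at `+∞`) or, for the circle, to minus the
closing jump. The corrected pieces `fᵢ − kᵢ` agree at the break points, so they glue to some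
`f ∈ M(I)` with `f − fᵢ = −kᵢ ∈ C(Xᵢ)⊗B`. The rest is formal: on each piece, differing by an
element of `C(Xᵢ)⊗B` (vanishing at the infinite ends) is an equivalence relation, and a function
lies in `I` iff it differs from `0` in this way on every piece, because continuous functions on
finitely many closed pieces glue.
-/

open DoubleCentralizer

namespace DoubleCentralizer

variable {B : Type*} [NonUnitalCStarAlgebra B]

theorem norm_coe (b : B) : ‖(b : 𝓜(ℂ, B))‖ = ‖b‖ := by
  rw [← norm_fst]
  exact ContinuousLinearMap.opNorm_mul_apply ℂ B b

theorem isometry_coe : Isometry (DoubleCentralizer.coe ℂ : B → 𝓜(ℂ, B)) :=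
  AddMonoidHomClass.isometry_of_norm (coeHom (𝕜 := ℂ) (A := B)) norm_coe

theorem coe_add (a b : B) : ((a + b : B) : 𝓜(ℂ, B)) = (a : 𝓜(ℂ, B)) + (b : 𝓜(ℂ, B)) :=
  map_add (coeHom (𝕜 := ℂ) (A := B)) a b

theorem coe_sub (a b : B) : ((a - b : B) : 𝓜(ℂ, B)) = (a : 𝓜(ℂ, B)) - (b : 𝓜(ℂ, B)) :=
  map_sub (coeHom (𝕜 := ℂ) (A := B)) a b

theorem coe_neg (a : B) : ((-a : B) : 𝓜(ℂ, B)) = -(a : 𝓜(ℂ, B)) :=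
  map_neg (coeHom (𝕜 := ℂ) (A := B)) a

end DoubleCentralizer

section Partition

variable {c : SpaceCase} {n : ℕ} {x : ℕ → ℝ}

theorem mem_caseSet_iff {t : ℝ} :
    t ∈ caseSet c ↔ leftEnd c ≤ (t : EReal) ∧ (t : EReal) ≤ rightEnd c := by
  cases c <;> simp [caseSet, leftEnd, rightEnd] <;> norm_cast <;> simp

theorem isClosed_subInt (i : ℕ) : IsClosed (subInt c n x i) :=
  isClosed_Icc.preimage continuous_coe_real_ereal

theorem ValidPartition.strictMonoOn (hx : ValidPartition c n x) : StrictMonoOn x (Set.Icc 1 n) := by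
  rintro i ⟨hi, -⟩ j ⟨-, hj⟩ hij
  induction j, hij using Nat.le_induction with
  | base => exact hx.1 i hi hj
  | succ j hij ih => exact (ih (by omega)).trans (hx.1 j (by omega) (by omega))

theorem ValidPartition.subInt_subset_caseSet (hx : ValidPartition c n x) {i : ℕ} (hi : i ≤ n) :
    subInt c n x i ⊆ caseSet c := by
  rintro t ⟨hleft, hright⟩
  rw [mem_caseSet_iff]
  constructor
  · split_ifs at hleft with h0
    · exact hleft
    · exact (hx.2 i (by omega) hi).1.le.trans hleft
  · split_ifs at hright with hn
    · exact hright
    · exact hright.trans (hx.2 (i + 1) (by omega) (by omega)).2.le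

theorem ValidPartition.eq_of_mem_subInt (hx : ValidPartition c n x) {i j : ℕ} (hij : i < j)
    (hj : j ≤ n) {t : ℝ} (hti : t ∈ subInt c n x i) (htj : t ∈ subInt c n x j) :
    j = i + 1 ∧ t = x j := by
  have hright : t ≤ x (i + 1) := by
    have := hti.2; rwa [if_neg (by omega), EReal.coe_le_coe_iff] at this
  have hleft : x j ≤ t := by
    have := htj.1; rwa [if_neg (by omega), EReal.coe_le_coe_iff] at this
  obtain rfl : j = i + 1 := by
    by_contra hne
    linarith [hx.strictMonoOn ⟨le_add_self, by omega⟩ ⟨by omega, hj⟩ (by omega : i + 1 < j)]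
  exact ⟨rfl, le_antisymm hright hleft⟩

noncomputable def segmentIndex (n : ℕ) (x : ℕ → ℝ) (t : ℝ) : ℕ :=
  Nat.findGreatest (fun i => x i ≤ t) n

theorem segmentIndex_le (t : ℝ) : segmentIndex n x t ≤ n :=
  Nat.findGreatest_le n

theorem mem_subInt_segmentIndex {t : ℝ} (ht : t ∈ caseSet c) :
    t ∈ subInt c n x (segmentIndex n x t) := by
  obtain ⟨hle, hmem, hmax⟩ := Nat.findGreatest_eq_iff.mp (rfl : segmentIndex n x t = _)
  rw [mem_caseSet_iff] at ht
  constructor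
  · split_ifs with h0
    · exact ht.1
    · exact EReal.coe_le_coe_iff.mpr (hmem h0)
  · split_ifs with hn
    · exact ht.2
    · exact EReal.coe_le_coe_iff.mpr (not_le.mp (hmax (Nat.lt_succ_self _) (by omega))).le

theorem caseSet_subset_iUnion_subInt : caseSet c ⊆ ⋃ i : Fin (n + 1), subInt c n x i :=
  fun t ht => Set.mem_iUnion.mpr
    ⟨⟨segmentIndex n x t, Nat.lt_succ_of_le (segmentIndex_le t)⟩, mem_subInt_segmentIndex ht⟩

theorem eventually_atTop_mem_subInt_last (hc : c = .halfLine ∨ c = .line) :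
    ∀ᶠ t in atTop, t ∈ subInt c n x n := by
  filter_upwards [eventually_ge_atTop (max 0 (x n))] with t ht
  refine ⟨?_, ?_⟩
  · split_ifs with h0
    · rcases hc with rfl | rfl
      · exact EReal.coe_le_coe_iff.mpr ((le_max_left _ _).trans ht)
      · exact bot_le
    · exact EReal.coe_le_coe_iff.mpr ((le_max_right _ _).trans ht)
  · rcases hc with rfl | rfl <;> simp [rightEnd]

theorem eventually_atBot_mem_subInt_zero (hc : c = .line) :
    ∀ᶠ t in atBot, t ∈ subInt c n x 0 := by
  subst hc
  filter_upwards [eventually_le_atBot (x 1)] with t ht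
  refine ⟨by simp [leftEnd], ?_⟩
  split_ifs
  · simp [rightEnd]
  · exact EReal.coe_le_coe_iff.mpr ht

theorem ValidPartition.zero_mem_subInt_zero (hx : ValidPartition c n x) (hc : c = .circle) :
    (0 : ℝ) ∈ subInt c n x 0 := by
  subst hc
  refine ⟨by simp [leftEnd], ?_⟩
  split_ifs with hn
  · simp [rightEnd]
  · simpa [leftEnd] using (hx.2 1 le_rfl (by omega)).1.le

theorem ValidPartition.one_mem_subInt_last (hx : ValidPartition c n x) (hc : c = .circle) :
    (1 : ℝ) ∈ subInt c n x n := by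
  subst hc
  refine ⟨?_, by simp [rightEnd]⟩
  split_ifs with hn
  · simp [leftEnd]
  · simpa [rightEnd] using (hx.2 n (by omega) le_rfl).2.le

end Partition

section Gluing

variable {c : SpaceCase} {n : ℕ} {x : ℕ → ℝ} {α : Type*}

noncomputable def glueSegments (n : ℕ) (x : ℕ → ℝ) (F : ℕ → ℝ → α) (t : ℝ) : α :=
  F (segmentIndex n x t) t

def AgreeOnOverlaps (c : SpaceCase) (n : ℕ) (x : ℕ → ℝ) (F : ℕ → ℝ → α) : Prop :=
  ∀ i ≤ n, ∀ j ≤ n, ∀ t ∈ subInt c n x i, t ∈ subInt c n x j → F i t = F j t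

theorem AgreeOnOverlaps.map {β : Type*} {F : ℕ → ℝ → α} (hF : AgreeOnOverlaps c n x F)
    (φ : α → β) : AgreeOnOverlaps c n x fun i t => φ (F i t) :=
  fun i hi j hj t hti htj => congrArg φ (hF i hi j hj t hti htj)

theorem ValidPartition.agreeOnOverlaps (hx : ValidPartition c n x) {F : ℕ → ℝ → α}
    (hF : ∀ j, 1 ≤ j → j ≤ n → F (j - 1) (x j) = F j (x j)) : AgreeOnOverlaps c n x F := by
  have key : ∀ i j, i < j → j ≤ n → ∀ t ∈ subInt c n x i, t ∈ subInt c n x j → F i t = F j t := by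
    intro i j hij hj t hti htj
    obtain ⟨rfl, rfl⟩ := hx.eq_of_mem_subInt hij hj hti htj
    exact hF (i + 1) (by omega) hj
  intro i hi j hj t hti htj
  rcases lt_trichotomy i j with hij | rfl | hji
  · exact key i j hij hj t hti htj
  · rfl
  · exact (key j i hji hi t htj hti).symm

theorem glueSegments_eq (hx : ValidPartition c n x) {F : ℕ → ℝ → α}
    (hF : AgreeOnOverlaps c n x F) {i : ℕ} (hi : i ≤ n) {t : ℝ} (ht : t ∈ subInt c n x i) :
    glueSegments n x F t = F i t :=
  hF _ (segmentIndex_le t) i hi t (mem_subInt_segmentIndex (hx.subInt_subset_caseSet hi ht)) ht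

theorem continuousOn_glueSegments [TopologicalSpace α] (hx : ValidPartition c n x)
    {F : ℕ → ℝ → α} (hF : AgreeOnOverlaps c n x F)
    (hcont : ∀ i ≤ n, ContinuousOn (F i) (subInt c n x i)) :
    ContinuousOn (glueSegments n x F) (caseSet c) := by
  have hi (i : Fin (n + 1)) : (i : ℕ) ≤ n := Nat.lt_succ_iff.mp i.2
  exact ((locallyFinite_of_finite fun i : Fin (n + 1) => subInt c n x i).continuousOn_iUnion
    (fun _ => isClosed_subInt _)
    fun i => (hcont i (hi i)).congr fun _ ht => glueSegments_eq hx hF (hi i) ht).mono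
    caseSet_subset_iUnion_subInt

theorem exists_norm_glueSegments_le [Norm α] {F : ℕ → ℝ → α}
    (hF : ∀ i ≤ n, ∃ C, ∀ t ∈ subInt c n x i, ‖F i t‖ ≤ C) :
    ∃ C, ∀ t ∈ caseSet c, ‖glueSegments n x F t‖ ≤ C := by
  choose! C hC using hF
  obtain ⟨M, hM⟩ := ((Finset.range (n + 1)).image C).bddAbove
  refine ⟨M, fun t ht => (hC _ (segmentIndex_le t) t (mem_subInt_segmentIndex ht)).trans ?_⟩
  have hrange := Finset.mem_range.mpr (Nat.lt_succ_of_le (segmentIndex_le (n := n) (x := x) t))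
  exact hM (Finset.mem_image_of_mem C hrange)

end Gluing

section Multipliers

variable {B : Type*} [NonUnitalCStarAlgebra B]

theorem StrictlyCtsOn.sub {f g : ℝ → 𝓜(ℂ, B)} {s : Set ℝ} (hf : StrictlyCtsOn f s)
    (hg : StrictlyCtsOn g s) : StrictlyCtsOn (fun t => f t - g t) s := fun b => by
  simp only [sub_mul, mul_sub]
  exact ⟨(hf b).1.sub (hg b).1, (hf b).2.sub (hg b).2⟩

theorem ContinuousOn.strictlyCtsOn_coe {k : ℝ → B} {s : Set ℝ} (hk : ContinuousOn k s) :
    StrictlyCtsOn (fun t => (k t : 𝓜(ℂ, B))) s := fun _ =>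
  have hk' := isometry_coe.continuous.comp_continuousOn hk
  ⟨hk'.mul continuousOn_const, continuousOn_const.mul hk'⟩

theorem strictlyCtsOn_glueSegments {c : SpaceCase} {n : ℕ} {x : ℕ → ℝ}
    (hx : ValidPartition c n x) {F : ℕ → ℝ → 𝓜(ℂ, B)} (hF : AgreeOnOverlaps c n x F)
    (hcont : ∀ i ≤ n, StrictlyCtsOn (F i) (subInt c n x i)) :
    StrictlyCtsOn (glueSegments n x F) (caseSet c) := fun b =>
  ⟨continuousOn_glueSegments hx (hF.map (· * (b : 𝓜(ℂ, B)))) fun i hi => (hcont i hi b).1,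
    continuousOn_glueSegments hx (hF.map ((b : 𝓜(ℂ, B)) * ·)) fun i hi => (hcont i hi b).2⟩

end Multipliers

section Coherence

variable {B : Type*} [NonUnitalCStarAlgebra B] {c : SpaceCase} {n : ℕ} {x : ℕ → ℝ} {i : ℕ}
  {f g h : ℝ → 𝓜(ℂ, B)}

theorem tendsto_norm_add_zero {α E : Type*} [SeminormedAddCommGroup E] {l : Filter α}
    {d d' : α → E} (hd : Tendsto (fun t => ‖d t‖) l (𝓝 0))
    (hd' : Tendsto (fun t => ‖d' t‖) l (𝓝 0)) :
    Tendsto (fun t => ‖d t + d' t‖) l (𝓝 0) := by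
  simpa using ((tendsto_zero_iff_norm_tendsto_zero.mpr hd).add
    (tendsto_zero_iff_norm_tendsto_zero.mpr hd')).norm

theorem CoherentOn.symm (hfg : CoherentOn c n x f g i) : CoherentOn c n x g f i := by
  obtain ⟨d, hcont, hd, htop, hbot⟩ := hfg
  refine ⟨fun t => -d t, hcont.neg, fun t ht => ?_, ?_, ?_⟩
  · rw [coe_neg, ← hd t ht, neg_sub]
  · simpa only [norm_neg] using htop
  · simpa only [norm_neg] using hbot

theorem CoherentOn.trans (hfg : CoherentOn c n x f g i) (hgh : CoherentOn c n x g h i) :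
    CoherentOn c n x f h i := by
  obtain ⟨d, hcont, hd, htop, hbot⟩ := hfg
  obtain ⟨d', hcont', hd', htop', hbot'⟩ := hgh
  refine ⟨fun t => d t + d' t, hcont.add hcont', fun t ht => ?_,
    fun hc hi => tendsto_norm_add_zero (htop hc hi) (htop' hc hi),
    fun hc hi => tendsto_norm_add_zero (hbot hc hi) (hbot' hc hi)⟩
  rw [coe_add, ← hd t ht, ← hd' t ht, sub_add_sub_cancel]

theorem coherentOn_sub_zero_iff :
    CoherentOn c n x (fun t => f t - g t) 0 i ↔ CoherentOn c n x f g i := by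
  simp only [CoherentOn, Pi.zero_apply, sub_zero]

theorem memIdeal_iff_forall_coherentOn (hx : ValidPartition c n x)
    (hh : c = .circle → h 0 = h 1) :
    MemIdeal c h ↔ ∀ i ≤ n, CoherentOn c n x h 0 i := by
  constructor
  · rintro ⟨d, hcont, hd, -, hhalf, hline⟩ i hi
    refine ⟨d, hcont.mono (hx.subInt_subset_caseSet hi),
      fun t ht => (sub_zero (h t)).trans (hd t (hx.subInt_subset_caseSet hi ht)), ?_,
      fun hc _ => (hline hc).2⟩
    rintro (hc | hc) -
    · exact hhalf hc
    · exact (hline hc).1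
  · intro hcoh
    choose! d hcont hd htop hbot using hcoh
    have hdh : ∀ i ≤ n, ∀ t ∈ subInt c n x i, (d i t : 𝓜(ℂ, B)) = h t := fun i hi t ht => by
      simpa using (hd i hi t ht).symm
    have hagree : AgreeOnOverlaps c n x d := fun i hi j hj t hti htj =>
      isometry_coe.injective ((hdh i hi t hti).trans (hdh j hj t htj).symm)
    have hglue : ∀ t ∈ caseSet c, ((glueSegments n x d t : B) : 𝓜(ℂ, B)) = h t := fun t ht =>
      hdh _ (segmentIndex_le t) t (mem_subInt_segmentIndex ht)
    have htop' (hc : c = .halfLine ∨ c = .line) :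
        Tendsto (fun t => ‖glueSegments n x d t‖) atTop (𝓝 0) :=
      (htop n le_rfl hc rfl).congr' ((eventually_atTop_mem_subInt_last (n := n) (x := x) hc).mono
        fun t ht => by simp only [glueSegments_eq hx hagree le_rfl ht])
    have hbot' (hc : c = .line) : Tendsto (fun t => ‖glueSegments n x d t‖) atBot (𝓝 0) :=
      (hbot 0 n.zero_le hc rfl).congr' ((eventually_atBot_mem_subInt_zero (n := n) (x := x) hc).mono
        fun t ht => by simp only [glueSegments_eq hx hagree n.zero_le ht])
    refine ⟨glueSegments n x d, continuousOn_glueSegments hx hagree hcont,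
      fun t ht => (hglue t ht).symm, fun hc => ?_, fun hc => htop' (.inl hc),
      fun hc => ⟨htop' (.inr hc), hbot' hc⟩⟩
    have hmem : ∀ t ∈ Set.Icc (0 : ℝ) 1, t ∈ caseSet c := fun t ht => by rwa [hc]
    exact isometry_coe.injective <| by
      rw [hglue 0 (hmem 0 ⟨le_rfl, zero_le_one⟩), hglue 1 (hmem 1 ⟨zero_le_one, le_rfl⟩), hh hc]

theorem forall_coherentOn_iff_memIdeal_sub (hx : ValidPartition c n x)
    {fS : ℕ → ℝ → 𝓜(ℂ, B)} (hf : MemMult c f) (hfS : ∀ i ≤ n, CoherentOn c n x f (fS i) i)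
    (hg : MemMult c g) :
    (∀ i ≤ n, CoherentOn c n x g (fS i) i) ↔ MemIdeal c (fun t => f t - g t) := by
  rw [memIdeal_iff_forall_coherentOn hx fun hc => by rw [hf.2.2 hc, hg.2.2 hc]]
  simp only [coherentOn_sub_zero_iff]
  exact forall₂_congr fun i hi =>
    ⟨fun hgi => (hfS i hi).trans hgi.symm, fun hfg => hfg.symm.trans (hfS i hi)⟩

end Coherence

section Correction

noncomputable def ramp (a b t : ℝ) : ℝ :=
  Set.projIcc 0 1 zero_le_one ((t - a) / (b - a))

variable {a b t : ℝ}

@[fun_prop]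
theorem continuous_ramp (a b : ℝ) : Continuous (ramp a b) :=
  continuous_subtype_val.comp (continuous_projIcc.comp (by fun_prop))

theorem ramp_mem_Icc : ramp a b t ∈ Set.Icc 0 1 :=
  Subtype.property _

theorem ramp_self : ramp a b a = 0 := by
  simp [ramp]

theorem ramp_of_le (hab : a < b) (ht : b ≤ t) : ramp a b t = 1 := by
  rw [ramp, Set.projIcc_of_right_le _ ((one_le_div (sub_pos.mpr hab)).mpr (by linarith))]

theorem norm_sub_ramp_smul_le {E : Type*} [SeminormedAddCommGroup E] [NormedSpace ℝ E]
    (u v : E) : ‖u - ramp a b t • v‖ ≤ ‖u‖ + ‖v‖ := by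
  refine (norm_sub_le _ _).trans (add_le_add_right ?_ _)
  rw [norm_smul, Real.norm_of_nonneg ramp_mem_Icc.1]
  exact mul_le_of_le_one_left (norm_nonneg v) ramp_mem_Icc.2

end Correction

section JumpCorrection

variable {B : Type*} [NonUnitalCStarAlgebra B] {c : SpaceCase} {n : ℕ} {x : ℕ → ℝ}
  {D : ℕ → B} {e : B}

structure IsJumpCorrection (c : SpaceCase) (n : ℕ) (x : ℕ → ℝ) (D : ℕ → B) (e : B)
    (k : ℕ → ℝ → B) : Prop where
  continuous : ∀ i, Continuous (k i)
  bounded : ∀ i, ∃ C, ∀ t, ‖k i t‖ ≤ C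
  jump : ∀ j, 1 ≤ j → j ≤ n → k j (x j) - k (j - 1) (x j) = D j
  eventually_atTop : (c = .halfLine ∨ c = .line) → ∀ᶠ t in atTop, k n t = 0
  eq_zero_of_line : c = .line → ∀ t, k 0 t = 0
  circle : c = .circle → k 0 0 - k n 1 = e

def jumpSum (D : ℕ → B) (i : ℕ) : B :=
  ∑ j ∈ Finset.range i, D (j + 1)

theorem jumpSum_zero : jumpSum D 0 = 0 :=
  Finset.sum_range_zero _

theorem jumpSum_sub_jumpSum_pred {j : ℕ} (hj : 1 ≤ j) : jumpSum D j - jumpSum D (j - 1) = D j := by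
  obtain ⟨m, rfl⟩ := Nat.exists_eq_add_of_le' hj
  simp [jumpSum, Finset.sum_range_succ]

noncomputable def lastCorrection : SpaceCase → ℕ → (ℕ → ℝ) → (ℕ → B) → B → ℝ → B
  | .circle, n, x, D, e, t => jumpSum D n - ramp (if n = 0 then 0 else x n) 1 t • (jumpSum D n + e)
  | _, n, x, D, _, t => jumpSum D n - ramp (x n) (x n + 1) t • jumpSum D n

noncomputable def jumpCorrection (c : SpaceCase) (n : ℕ) (x : ℕ → ℝ) (D : ℕ → B) (e : B)
    (i : ℕ) (t : ℝ) : B :=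
  if i = n then lastCorrection c n x D e t else jumpSum D i

theorem jumpCorrection_of_ne {i : ℕ} (hi : i ≠ n) (t : ℝ) :
    jumpCorrection c n x D e i t = jumpSum D i :=
  if_neg hi

theorem jumpCorrection_last (t : ℝ) : jumpCorrection c n x D e n t = lastCorrection c n x D e t :=
  if_pos rfl

theorem continuous_lastCorrection : Continuous (lastCorrection c n x D e) := by
  cases c <;> unfold lastCorrection <;> fun_prop

theorem lastCorrection_apply_last (hn : n ≠ 0) : lastCorrection c n x D e (x n) = jumpSum D n := by
  cases c <;> simp [lastCorrection, hn, ramp_self]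

theorem jumpCorrection_zero_zero_of_circle (hc : c = .circle) :
    jumpCorrection c n x D e 0 0 = 0 := by
  subst hc
  rcases eq_or_ne n 0 with rfl | hn
  · simp [jumpCorrection, lastCorrection, ramp_self, jumpSum_zero]
  · rw [jumpCorrection_of_ne hn.symm, jumpSum_zero]

theorem ValidPartition.isJumpCorrection (hx : ValidPartition c n x) :
    IsJumpCorrection c n x D e (jumpCorrection c n x D e) where
  continuous i := by
    rcases eq_or_ne i n with rfl | hi
    · exact continuous_lastCorrection.congr fun t => (jumpCorrection_last t).symm
    · exact continuous_const.congr fun t => (jumpCorrection_of_ne hi t).symm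
  bounded i := by
    rcases eq_or_ne i n with rfl | hi
    · simp only [jumpCorrection_last]
      cases c <;> exact ⟨_, fun t => norm_sub_ramp_smul_le _ _⟩
    · exact ⟨_, fun t => (congrArg norm (jumpCorrection_of_ne hi t)).le⟩
  jump j hj hjn := by
    rw [jumpCorrection_of_ne (by omega : j - 1 ≠ n)]
    rcases eq_or_ne j n with rfl | hjn'
    · rw [jumpCorrection_last, lastCorrection_apply_last (by omega), jumpSum_sub_jumpSum_pred hj]
    · rw [jumpCorrection_of_ne hjn', jumpSum_sub_jumpSum_pred hj]
  eventually_atTop hc := by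
    filter_upwards [eventually_ge_atTop (x n + 1)] with t ht
    rcases hc with rfl | rfl <;>
      simp [jumpCorrection_last, lastCorrection, ramp_of_le (lt_add_one (x n)) ht]
  eq_zero_of_line hc t := by
    subst hc
    rcases eq_or_ne n 0 with rfl | hn
    · simp [jumpCorrection_last, lastCorrection, jumpSum_zero]
    · rw [jumpCorrection_of_ne hn.symm, jumpSum_zero]
  circle hc := by
    rw [jumpCorrection_zero_zero_of_circle hc]
    have hlt : (if n = 0 then 0 else x n) < (1 : ℝ) := by
      split_ifs with hn
      · exact zero_lt_one
      · have := (hx.2 n (by omega) le_rfl).2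
        rw [hc, rightEnd] at this
        exact_mod_cast this
    subst hc
    simp [jumpCorrection_last, lastCorrection, ramp_of_le hlt le_rfl]

end JumpCorrection

namespace IsJumpCorrection

variable {B : Type*} [NonUnitalCStarAlgebra B] {c : SpaceCase} {n : ℕ} {x : ℕ → ℝ}
  {fS : ℕ → ℝ → 𝓜(ℂ, B)} {D : ℕ → B} {e : B} {k : ℕ → ℝ → B}

theorem agreeOnOverlaps (hk : IsJumpCorrection c n x D e k) (hx : ValidPartition c n x)
    (hD : ∀ j, 1 ≤ j → j ≤ n → (D j : 𝓜(ℂ, B)) = fS j (x j) - fS (j - 1) (x j)) :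
    AgreeOnOverlaps c n x fun i t => fS i t - (k i t : 𝓜(ℂ, B)) :=
  hx.agreeOnOverlaps fun j hj hjn => by
    have hjump := hD j hj hjn
    rw [← hk.jump j hj hjn, coe_sub] at hjump
    rw [eq_comm, sub_eq_sub_iff_sub_eq_sub, hjump]

theorem memMult (hk : IsJumpCorrection c n x D e k) (hx : ValidPartition c n x)
    (hD : ∀ j, 1 ≤ j → j ≤ n → (D j : 𝓜(ℂ, B)) = fS j (x j) - fS (j - 1) (x j))
    (he : c = .circle → (e : 𝓜(ℂ, B)) = fS 0 0 - fS n 1)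
    (hfS : ∀ i ≤ n, StrictlyCtsOn (fS i) (subInt c n x i) ∧
      ∃ C : ℝ, ∀ t ∈ subInt c n x i, ‖fS i t‖ ≤ C) :
    MemMult c (glueSegments n x fun i t => fS i t - (k i t : 𝓜(ℂ, B))) := by
  have hagree := hk.agreeOnOverlaps hx hD
  refine ⟨strictlyCtsOn_glueSegments hx hagree fun i hi =>
      (hfS i hi).1.sub (hk.continuous i).continuousOn.strictlyCtsOn_coe,
    exists_norm_glueSegments_le fun i hi => ?_, fun hc => ?_⟩
  · obtain ⟨C, hC⟩ := (hfS i hi).2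
    obtain ⟨K, hK⟩ := hk.bounded i
    exact ⟨C + K, fun t ht =>
      (norm_sub_le _ _).trans (add_le_add (hC t ht) ((norm_coe _).trans_le (hK t)))⟩
  · rw [glueSegments_eq hx hagree n.zero_le (hx.zero_mem_subInt_zero hc),
      glueSegments_eq hx hagree le_rfl (hx.one_mem_subInt_last hc),
      sub_eq_sub_iff_sub_eq_sub, ← he hc, ← hk.circle hc, coe_sub]

theorem coherentOn (hk : IsJumpCorrection c n x D e k) (hx : ValidPartition c n x)
    (hD : ∀ j, 1 ≤ j → j ≤ n → (D j : 𝓜(ℂ, B)) = fS j (x j) - fS (j - 1) (x j))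
    {i : ℕ} (hi : i ≤ n) :
    CoherentOn c n x (glueSegments n x fun j t => fS j t - (k j t : 𝓜(ℂ, B))) (fS i) i := by
  refine ⟨fun t => -k i t, (hk.continuous i).neg.continuousOn, fun t ht => ?_, ?_, ?_⟩
  · rw [glueSegments_eq hx (hk.agreeOnOverlaps hx hD) hi ht, coe_neg, sub_sub_cancel_left]
  · rintro hc rfl
    exact tendsto_const_nhds.congr' ((hk.eventually_atTop hc).mono fun t ht => by simp [ht])
  · rintro hc rfl
    simp [hk.eq_zero_of_line hc]

end IsJumpCorrection

theorem stmt5_general {B : Type*} [NonUnitalCStarAlgebra B]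
    (c : SpaceCase) (n : ℕ) (x : ℕ → ℝ) (hx : ValidPartition c n x)
    (fS : ℕ → ℝ → 𝓜(ℂ, B))
    -- each `fᵢ ∈ C_b(Xᵢ, M(B)_s)`:
    (hfS : ∀ i ≤ n, StrictlyCtsOn (fS i) (subInt c n x i) ∧
      ∃ C : ℝ, ∀ t ∈ subInt c n x i, ‖fS i t‖ ≤ C)
    -- `fᵢ(xᵢ) − f_{i−1}(xᵢ) ∈ B` for `i = 1, …, n`:
    (hjump : ∀ i, 1 ≤ i → i ≤ n → fS i (x i) - fS (i - 1) (x i) ∈ canonicalIdeal B)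
    -- for the circle, `f₀(x₀) − fₙ(x₀) ∈ B` at the identified endpoint `x₀ = 0 = 1`:
    (hcirc : c = SpaceCase.circle → fS 0 0 - fS n 1 ∈ canonicalIdeal B) :
    ∃ f : ℝ → 𝓜(ℂ, B),
      (MemMult c f ∧ ∀ i ≤ n, CoherentOn c n x f (fS i) i) ∧
      ∀ g : ℝ → 𝓜(ℂ, B), MemMult c g →
        ((∀ i ≤ n, CoherentOn c n x g (fS i) i) ↔ MemIdeal c (fun t => f t - g t)) := by
  simp only [canonicalIdeal, Set.mem_range] at hjump hcirc
  choose! D hD using hjump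
  choose! e he using hcirc
  have hk := hx.isJumpCorrection (D := D) (e := e)
  have hf := hk.memMult hx hD he hfS
  have hcoh := fun i (hi : i ≤ n) => hk.coherentOn (fS := fS) hx hD hi
  exact ⟨_, ⟨hf, hcoh⟩, fun g hg => forall_coherentOn_iff_memIdeal_sub hx hf hcoh hg⟩

theorem stmt5 {B : Type*} [NonUnitalCStarAlgebra B] (hB : StableCStar B)
    (c : SpaceCase) (n : ℕ) (x : ℕ → ℝ) (hx : ValidPartition c n x)
    (fS : ℕ → ℝ → 𝓜(ℂ, B))
    -- each `fᵢ ∈ C_b(Xᵢ, M(B)_s)`: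
    (hfS : ∀ i ≤ n, StrictlyCtsOn (fS i) (subInt c n x i) ∧
      ∃ C : ℝ, ∀ t ∈ subInt c n x i, ‖fS i t‖ ≤ C)
    -- `fᵢ(xᵢ) − f_{i−1}(xᵢ) ∈ B` for `i = 1, …, n`:
    (hjump : ∀ i, 1 ≤ i → i ≤ n → fS i (x i) - fS (i - 1) (x i) ∈ canonicalIdeal B)
    -- for the circle, `f₀(x₀) − fₙ(x₀) ∈ B` at the identified endpoint `x₀ = 0 = 1`:
    (hcirc : c = SpaceCase.circle → fS 0 0 - fS n 1 ∈ canonicalIdeal B) :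
    ∃ f : ℝ → 𝓜(ℂ, B),
      (MemMult c f ∧ ∀ i ≤ n, CoherentOn c n x f (fS i) i) ∧
      ∀ g : ℝ → 𝓜(ℂ, B), MemMult c g →
        ((∀ i ≤ n, CoherentOn c n x g (fS i) i) ↔ MemIdeal c (fun t => f t - g t)) :=
  stmt5_general c n x hx fS hfS hjump hcirc
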